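/- arXiv:2603.21037 — 2 statements merged into one kernel-verified Lean document; each statement's English description precedes it below -/
import Mathlib

section
/- Let D > 0. Then there exists a constant C ≥ 1 such that for every subgroup Γ of SL(2,ℝ) with the property that |tr A| ≥ 2 for every A ∈ Γ (i.e. Γ contains no elliptic elements), and for all points z, w in the upper half-plane ℍ with d_ℍ(z, w) ≤ D, one has inf{ d_ℍ(w, A·w) : A ∈ Γ, A ∉ {I, −I} } ≤ C · inf{ d_ℍ(z, A·z) : A ∈ Γ, A ∉ {I, −I} }, where the infima are taken in the extended nonnegative reals [0, ∞] (with inf ∅ = ∞). -/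
/-!
For `g ∈ SL(2,ℝ)`, `sinh (d(z, g z) / 2) = |c z² + (d - a) z - b| / (2 Im z)`. If `|tr g| ≥ 2`, the
discriminant of this quadratic is `tr² - 4 ≥ 0`, so it splits into two real linear factors
`α z + β`. Each `|α z + β|² / Im z` is `1 / Im (h z)` for an `h ∈ SL(2,ℝ)` with bottom row
`(α, β)`, and `log Im` is `1`-Lipschitz for `d_ℍ`, so it grows by at most the factor `exp d(z, w)`.
Hence `sinh (d(w, g w) / 2) ≤ exp d(z, w) · sinh (d(z, g z) / 2)`, which controls small
displacements linearly; large ones are handled by `d(w, g w) ≤ d(z, g z) + 2 d(z, w)`.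
-/

open UpperHalfPlane Matrix
open scoped MatrixGroups ENNReal

lemma Real.sinh_le_mul_exp {t : ℝ} (ht : 0 ≤ t) : Real.sinh t ≤ t * Real.exp t := by
  have h := Real.one_sub_le_exp_neg t
  have hmul : Real.exp (-t) * Real.exp t = 1 := by
    rw [← Real.exp_add, neg_add_cancel, Real.exp_zero]
  rw [Real.sinh_eq]
  nlinarith [Real.one_le_exp ht, Real.exp_pos t]

lemma exists_linear_factors_of_discrim_nonneg {p q r : ℝ} (h : 0 ≤ discrim p q r) :
    ∃ α₁ β₁ α₂ β₂ : ℝ, ∀ u : ℂ,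
      p * u ^ 2 + q * u + r = (α₁ * u + β₁) * (α₂ * u + β₂) := by
  by_cases hp : p = 0
  · exact ⟨q, r, 0, 1, fun u => by simp [hp]⟩
  set s := √(discrim p q r)
  have hs : (s : ℂ) ^ 2 = q ^ 2 - 4 * p * r := by
    rw [← Complex.ofReal_pow, Real.sq_sqrt h, discrim]
    push_cast
    ring
  refine ⟨p, (q - s) / 2, 1, (q + s) / (2 * p), fun u => ?_⟩
  have hpC : (p : ℂ) ≠ 0 := by exact_mod_cast hp
  push_cast
  field_simp
  linear_combination hs

lemma exists_SL2_bottomRow_eq {α β : ℝ} (h : α ≠ 0 ∨ β ≠ 0) :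
    ∃ g : SL(2, ℝ), g 1 0 = α ∧ g 1 1 = β := by
  by_cases hα : α = 0
  · subst hα
    have hβ : β ≠ 0 := h.resolve_left (not_not.mpr rfl)
    exact ⟨⟨!![β⁻¹, 0; 0, β], by simp [det_fin_two_of, hβ]⟩, rfl, rfl⟩
  · exact ⟨⟨!![0, -α⁻¹; α, β], by simp [det_fin_two_of, hα]⟩, rfl, rfl⟩

namespace UpperHalfPlane

lemma im_specialLinearGroup_smul (g : SL(2, ℝ)) (z : ℍ) :
    (g • z).im = z.im / ‖(g 1 0 : ℂ) * z + g 1 1‖ ^ 2 := by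
  rw [show g • z = (g : GL (Fin 2) ℝ) • z from rfl, im_smul_eq_div_normSq,
    Complex.normSq_eq_norm_sq]
  simp [denom]

lemma inv_im_le_exp_dist_mul_inv_im (z w : ℍ) :
    w.im⁻¹ ≤ Real.exp (dist z w) * z.im⁻¹ := by
  rw [← div_eq_mul_inv, inv_le_comm₀ w.im_pos (by positivity), inv_div]
  exact im_div_exp_dist_le z w

lemma norm_denom_sq_div_im_le (g : SL(2, ℝ)) (z w : ℍ) :
    ‖(g 1 0 : ℂ) * w + g 1 1‖ ^ 2 / w.im
      ≤ Real.exp (dist z w) * (‖(g 1 0 : ℂ) * z + g 1 1‖ ^ 2 / z.im) := by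
  have h (u : ℍ) : ‖(g 1 0 : ℂ) * u + g 1 1‖ ^ 2 / u.im = (g • u).im⁻¹ := by
    rw [im_specialLinearGroup_smul, inv_div]
  simpa only [h, dist_smul] using inv_im_le_exp_dist_mul_inv_im (g • z) (g • w)

lemma norm_linear_sq_div_im_le (α β : ℝ) (z w : ℍ) :
    ‖(α : ℂ) * w + β‖ ^ 2 / w.im ≤ Real.exp (dist z w) * (‖(α : ℂ) * z + β‖ ^ 2 / z.im) := by
  by_cases h : α = 0 ∧ β = 0
  · simp [h.1, h.2]
  obtain ⟨g, rfl, rfl⟩ := exists_SL2_bottomRow_eq (not_and_or.mp h)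
  exact norm_denom_sq_div_im_le g z w

lemma sinh_half_dist_smul (g : SL(2, ℝ)) (z : ℍ) :
    Real.sinh (dist z (g • z) / 2)
      = ‖(g 1 0 : ℂ) * z ^ 2 + ((g 1 1 : ℂ) - g 0 0) * z - g 0 1‖ / (2 * z.im) := by
  have hden : (g 1 0 : ℂ) * z + g 1 1 ≠ 0 := denom_ne_zero (g : GL (Fin 2) ℝ) z
  have hsub : (z : ℂ) - (g • z : ℍ)
      = ((g 1 0 : ℂ) * z ^ 2 + ((g 1 1 : ℂ) - g 0 0) * z - g 0 1) / ((g 1 0 : ℂ) * z + g 1 1) := by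
    rw [coe_specialLinearGroup_apply]
    simp only [Algebra.algebraMap_self, RingHom.id_apply]
    rw [eq_div_iff hden, sub_mul, div_mul_cancel₀ _ hden]
    ring
  have hsqrt : √(z.im * (g • z).im) = z.im / ‖(g 1 0 : ℂ) * z + g 1 1‖ := by
    rw [im_specialLinearGroup_smul, ← mul_div_assoc, ← sq, ← div_pow,
      Real.sqrt_sq (by positivity)]
  rw [sinh_half_dist, Complex.dist_eq, hsub, hsqrt, norm_div]
  have := z.im_pos
  field_simp

lemma sinh_half_dist_smul_sq (g : SL(2, ℝ)) (z : ℍ) {α₁ β₁ α₂ β₂ : ℝ}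
    (hfac : ∀ u : ℂ, (g 1 0 : ℂ) * u ^ 2 + ((g 1 1 : ℂ) - g 0 0) * u - g 0 1
      = (α₁ * u + β₁) * (α₂ * u + β₂)) :
    Real.sinh (dist z (g • z) / 2) ^ 2
      = (‖(α₁ : ℂ) * z + β₁‖ ^ 2 / z.im) * (‖(α₂ : ℂ) * z + β₂‖ ^ 2 / z.im) / 4 := by
  rw [sinh_half_dist_smul, hfac, norm_mul]
  have := z.im_pos
  field_simp
  ring

lemma sinh_half_dist_smul_le (g : SL(2, ℝ))
    (hg : 2 ≤ |Matrix.trace (g : Matrix (Fin 2) (Fin 2) ℝ)|) (z w : ℍ) :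
    Real.sinh (dist w (g • w) / 2) ≤ Real.exp (dist z w) * Real.sinh (dist z (g • z) / 2) := by
  have hdiscrim : 0 ≤ discrim (g 1 0) (g 1 1 - g 0 0) (-g 0 1) := by
    have hdet : g 0 0 * g 1 1 - g 0 1 * g 1 0 = 1 := by
      rw [← det_fin_two]; exact g.prop
    rw [trace_fin_two] at hg
    rw [discrim]
    nlinarith [sq_abs (g 0 0 + g 1 1)]
  obtain ⟨α₁, β₁, α₂, β₂, hfac⟩ := exists_linear_factors_of_discrim_nonneg hdiscrim
  replace hfac (u : ℂ) : (g 1 0 : ℂ) * u ^ 2 + ((g 1 1 : ℂ) - g 0 0) * u - g 0 1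
      = (α₁ * u + β₁) * (α₂ * u + β₂) := by
    rw [← hfac]; push_cast; ring
  refine le_of_pow_le_pow_left₀ two_ne_zero (by positivity) ?_
  rw [mul_pow, sinh_half_dist_smul_sq g w hfac, sinh_half_dist_smul_sq g z hfac]
  calc _ ≤ (Real.exp (dist z w) * (‖(α₁ : ℂ) * z + β₁‖ ^ 2 / z.im))
        * (Real.exp (dist z w) * (‖(α₂ : ℂ) * z + β₂‖ ^ 2 / z.im)) / 4 := by
        gcongr
        exacts [norm_linear_sq_div_im_le α₁ β₁ z w, norm_linear_sq_div_im_le α₂ β₂ z w]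
    _ = _ := by ring

lemma dist_smul_le_mul_dist_smul (g : SL(2, ℝ))
    (hg : 2 ≤ |Matrix.trace (g : Matrix (Fin 2) (Fin 2) ℝ)|) {z w : ℍ} {D : ℝ}
    (hzw : dist z w ≤ D) :
    dist w (g • w) ≤ (2 * D + 1 + Real.exp (D + 1)) * dist z (g • z) := by
  set x := dist z (g • z)
  set y := dist w (g • w)
  have hx : 0 ≤ x := dist_nonneg
  have hy : 0 ≤ y := dist_nonneg
  have hD : 0 ≤ D := dist_nonneg.trans hzw
  have hexp := Real.exp_pos (D + 1)
  rcases le_or_gt 1 x with hx1 | hx1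
  · have hadd : y ≤ x + 2 * D :=
      calc y ≤ dist w z + x + dist (g • z) (g • w) := dist_triangle4 _ _ _ _
        _ ≤ x + 2 * D := by rw [dist_smul, dist_comm w z]; linarith
    nlinarith
  · have hsinh : Real.sinh (x / 2) ≤ x / 2 * Real.exp 1 :=
      (Real.sinh_le_mul_exp (by positivity)).trans
        (mul_le_mul_of_nonneg_left (Real.exp_le_exp.mpr (by linarith)) (by positivity))
    calc y ≤ 2 * Real.sinh (y / 2) := by
          linarith [(Real.self_le_sinh_iff (x := y / 2)).mpr (by positivity)]
      _ ≤ 2 * (Real.exp D * Real.sinh (x / 2)) := by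
        gcongr
        exact (sinh_half_dist_smul_le g hg z w).trans
          (mul_le_mul_of_nonneg_right (Real.exp_le_exp.mpr hzw) (by positivity))
      _ ≤ 2 * (Real.exp D * (x / 2 * Real.exp 1)) := by gcongr
      _ = Real.exp (D + 1) * x := by rw [Real.exp_add]; ring
      _ ≤ (2 * D + 1 + Real.exp (D + 1)) * x := by nlinarith

end UpperHalfPlane

/-- For every `D > 0` there exists `C ≥ 1` such that for every subgroup
`Γ ≤ SL(2,ℝ)` without elliptic elements (`|tr A| ≥ 2` for all `A ∈ Γ`), and
all `z, w ∈ ℍ` with `d_ℍ(z,w) ≤ D`, the infimum (in `[0,∞]`) of the translation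
lengths `d_ℍ(w, A·w)` over nontrivial `A ∈ Γ` is at most `C` times the
corresponding infimum at `z`. -/
theorem stmt1 (D : ℝ) (hD : 0 < D) :
    ∃ C : ℝ, 1 ≤ C ∧
      ∀ Γ : Subgroup SL(2, ℝ),
        (∀ A ∈ Γ, 2 ≤ |Matrix.trace (A : Matrix (Fin 2) (Fin 2) ℝ)|) →
        ∀ z w : ℍ, dist z w ≤ D →
          sInf {d : ℝ≥0∞ | ∃ A ∈ Γ, A ≠ 1 ∧ A ≠ -1 ∧
              d = ENNReal.ofReal (dist w (A • w))}
            ≤ ENNReal.ofReal C *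
              sInf {d : ℝ≥0∞ | ∃ A ∈ Γ, A ≠ 1 ∧ A ≠ -1 ∧
                d = ENNReal.ofReal (dist z (A • z))} := by
  have hC : 1 ≤ 2 * D + 1 + Real.exp (D + 1) := by linarith [Real.exp_pos (D + 1)]
  refine ⟨_, hC, fun Γ hΓ z w hzw => ?_⟩
  have hC₀ : ENNReal.ofReal (2 * D + 1 + Real.exp (D + 1)) ≠ 0 := by
    rw [ne_eq, ENNReal.ofReal_eq_zero, not_le]; linarith
  rw [mul_comm, ← ENNReal.div_le_iff hC₀ ENNReal.ofReal_ne_top]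
  refine le_sInf ?_
  rintro _ ⟨A, hA, hA₁, hA₂, rfl⟩
  rw [ENNReal.div_le_iff hC₀ ENNReal.ofReal_ne_top, mul_comm, ← ENNReal.ofReal_mul (by linarith)]
  refine (sInf_le ?_).trans
    (ENNReal.ofReal_le_ofReal (dist_smul_le_mul_dist_smul A (hΓ A hA) hzw))
  exact ⟨A, hA, hA₁, hA₂, rfl⟩
end

section
/- Let r₀ > 1 and let A(r₀) = {z ∈ ℂ : r₀⁻¹ < |z| < r₀}. Let (fₙ) be a sequence of functions, each holomorphic on A(r₀) and integrable on A(r₀) with respect to planar Lebesgue measure, and suppose fₙ → 0 uniformly on every compact subset of A(r₀). Then ∫_{A(r₀)} (z²/|z|²)·fₙ(z) dA(z) → 0 as n → ∞. (No uniform bound on the L¹ norms of the fₙ is assumed.) -/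
/-!
In polar coordinates `z = r e^{iθ}` the weight `z²/|z|²` turns the inner `θ`-integral of
`(z²/|z|²) f(z)` over the circle of radius `r` into `(i r)⁻¹ ∮_{|z|=r} z f(z) dz`. By Cauchy's
theorem this circle integral does not depend on `r`, so
`∫_{A(r₀)} (z²/|z|²) f = i⁻¹ log (r₀²) ∮_{|z|=1} z f(z) dz`. Only the unit circle is left, on
which `fₙ → 0` uniformly, so the circle integrals, and with them the area integrals, tend to `0`.
-/

open MeasureTheory Real Complex Filter Set Metric

def annulus (a b : ℝ) : Set ℂ := {z | a < ‖z‖ ∧ ‖z‖ < b}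

theorem isOpen_annulus (a b : ℝ) : IsOpen (annulus a b) :=
  isOpen_Ioo.preimage continuous_norm

theorem sphere_subset_annulus {a b r : ℝ} (hr : r ∈ Ioo a b) : sphere (0 : ℂ) r ⊆ annulus a b := by
  intro z hz
  rw [mem_sphere_zero_iff_norm] at hz
  change a < ‖z‖ ∧ ‖z‖ < b
  rwa [hz]

theorem Complex.polarCoord_symm_eq_circleMap (r θ : ℝ) :
    Complex.polarCoord.symm (r, θ) = circleMap 0 r θ := by
  simp [circleMap, Complex.exp_mul_I]

theorem Complex.integrableOn_comp_polarCoord_symm {E : Type*} [NormedAddCommGroup E]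
    [NormedSpace ℝ E] {g : ℂ → E} (hg : Integrable g) :
    IntegrableOn (fun p : ℝ × ℝ => p.1 • g (Complex.polarCoord.symm p)) polarCoord.target := by
  have hg' : Integrable (g ∘ measurableEquivRealProd.symm) :=
    ((volume_preserving_equiv_real_prod.symm).integrable_comp_emb
      measurableEquivRealProd.symm.measurableEmbedding).2 hg
  have hpolar := (integrableOn_image_iff_integrableOn_abs_det_fderiv_smul volume
    polarCoord.open_target.measurableSet
    (fun p _ => (hasFDerivAt_polarCoord_symm p).hasFDerivWithinAt) polarCoord.symm.injOn
    (g ∘ measurableEquivRealProd.symm)).1 (by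
      rw [polarCoord.symm_image_target_eq_source]; exact hg'.integrableOn)
  refine hpolar.congr_fun (fun p hp => ?_) polarCoord.open_target.measurableSet
  dsimp only
  rw [det_fderivPolarCoordSymm, abs_of_pos hp.1]
  rfl

theorem Complex.polarCoord_symm_mem_annulus_iff {a b : ℝ} {p : ℝ × ℝ} (hp : 0 < p.1) :
    Complex.polarCoord.symm p ∈ annulus a b ↔ p.1 ∈ Ioo a b := by
  change a < _ ∧ _ < b ↔ _
  rw [norm_polarCoord_symm, abs_of_pos hp]
  rfl

theorem setIntegral_annulus_eq_integral_circleMap {E : Type*} [NormedAddCommGroup E]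
    [NormedSpace ℝ E] {a b : ℝ} {g : ℂ → E} (ha : 0 ≤ a) (hg : IntegrableOn g (annulus a b)) :
    ∫ z in annulus a b, g z = ∫ r in Ioo a b, r • ∫ θ in 0..2 * π, g (circleMap 0 r θ) := by
  set T : Set (ℝ × ℝ) := Ioo a b ×ˢ Ioo (-π) π
  have hT : T ⊆ polarCoord.target := prod_mono (fun r hr => ha.trans_lt hr.1) subset_rfl
  have hgT : EqOn (fun p : ℝ × ℝ => p.1 • (annulus a b).indicator g (Complex.polarCoord.symm p))
      (T.indicator fun p => p.1 • g (Complex.polarCoord.symm p)) polarCoord.target := by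
    intro p hp
    dsimp only
    by_cases hpT : p.1 ∈ Ioo a b
    · rw [indicator_of_mem ((Complex.polarCoord_symm_mem_annulus_iff hp.1).2 hpT),
        indicator_of_mem (show p ∈ T from ⟨hpT, hp.2⟩)]
    · rw [indicator_of_notMem (mt (Complex.polarCoord_symm_mem_annulus_iff hp.1).1 hpT),
        indicator_of_notMem (show p ∉ T from fun h => hpT h.1), smul_zero]
  have hint : IntegrableOn (fun p : ℝ × ℝ => p.1 • g (Complex.polarCoord.symm p)) T := by
    refine (((Complex.integrableOn_comp_polarCoord_symm
      ((integrable_indicator_iff (isOpen_annulus a b).measurableSet).2 hg)).congr_fun hgT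
      polarCoord.open_target.measurableSet).mono_set hT).congr_fun (fun p hp => ?_)
      (measurableSet_Ioo.prod measurableSet_Ioo)
    exact indicator_of_mem hp _
  have hperiodic (r : ℝ) : ∫ θ in Ioo (-π) π, g (circleMap 0 r θ)
      = ∫ θ in 0..2 * π, g (circleMap 0 r θ) := by
    have := ((periodic_circleMap 0 r).comp g).intervalIntegral_add_eq (-π) 0
    rw [show -π + 2 * π = π by ring, zero_add] at this
    rw [← integral_Ioc_eq_integral_Ioo, ← intervalIntegral.integral_of_le (by linarith [pi_pos])]
    exact this
  calc ∫ z in annulus a b, g z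
      = ∫ p in polarCoord.target, p.1 • (annulus a b).indicator g (Complex.polarCoord.symm p) := by
        rw [Complex.integral_comp_polarCoord_symm,
          integral_indicator (isOpen_annulus a b).measurableSet]
    _ = ∫ p in T, p.1 • g (Complex.polarCoord.symm p) := by
        rw [setIntegral_congr_fun polarCoord.open_target.measurableSet hgT,
          setIntegral_indicator (measurableSet_Ioo.prod measurableSet_Ioo),
          inter_eq_self_of_subset_right hT]
    _ = ∫ r in Ioo a b, ∫ θ in Ioo (-π) π, r • g (circleMap 0 r θ) := by
        rw [Measure.volume_eq_prod] at hint ⊢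
        rw [setIntegral_prod _ hint]
        simp only [Complex.polarCoord_symm_eq_circleMap]
    _ = ∫ r in Ioo a b, r • ∫ θ in 0..2 * π, g (circleMap 0 r θ) := by
        simp_rw [integral_smul, hperiodic]

theorem circleIntegral_eq_of_differentiableOn_annulus {E : Type*} [NormedAddCommGroup E]
    [NormedSpace ℂ E] [CompleteSpace E] {a b r s : ℝ} {f : ℂ → E} (ha : 0 ≤ a)
    (hf : DifferentiableOn ℂ f (annulus a b)) (hr : r ∈ Ioo a b) (hs : s ∈ Ioo a b) :
    (∮ z in C(0, r), f z) = ∮ z in C(0, s), f z := by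
  wlog hrs : r ≤ s generalizing r s
  · exact (this hs hr (le_of_not_ge hrs)).symm
  have hsub : closedBall (0 : ℂ) s \ ball 0 r ⊆ annulus a b := fun z ⟨hzs, hzr⟩ => by
    rw [mem_closedBall_zero_iff] at hzs
    rw [mem_ball_zero_iff, not_lt] at hzr
    exact ⟨hr.1.trans_le hzr, hzs.trans_lt hs.2⟩
  refine (circleIntegral_eq_of_differentiable_on_annulus_off_countable (ha.trans_lt hr.1) hrs
    countable_empty (hf.continuousOn.mono hsub) fun z hz => ?_).symm
  refine hf.differentiableAt ((isOpen_annulus a b).mem_nhds (hsub ?_))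
  exact ⟨ball_subset_closedBall hz.1.1, fun h => hz.1.2 (ball_subset_closedBall h)⟩

theorem integral_circleMap_sq_div_norm_sq_mul (f : ℂ → ℂ) (r : ℝ) :
    ∫ θ in 0..2 * π, (circleMap 0 r θ ^ 2 / (‖circleMap 0 r θ‖ : ℂ) ^ 2) * f (circleMap 0 r θ)
      = (I * r ^ 2)⁻¹ * ∮ z in C(0, r), z * f z := by
  rcases eq_or_ne r 0 with rfl | hr
  · simp
  rw [circleIntegral, ← intervalIntegral.integral_const_mul]
  refine intervalIntegral.integral_congr fun θ _ => ?_
  have hnorm : (‖circleMap 0 r θ‖ : ℂ) ^ 2 = (r : ℂ) ^ 2 := by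
    rw [norm_circleMap_zero, ← ofReal_pow, sq_abs, ofReal_pow]
  simp only [hnorm, deriv_circleMap, smul_eq_mul]
  field_simp

theorem Complex.norm_sq_div_norm_sq_le_one (z : ℂ) : ‖z ^ 2 / (‖z‖ : ℂ) ^ 2‖ ≤ 1 := by
  rw [norm_div, norm_pow, norm_pow, norm_real, norm_norm]
  exact div_self_le_one _

theorem setIntegral_annulus_sq_div_norm_sq_mul {a b c : ℝ} {f : ℂ → ℂ} (ha : 0 < a)
    (hf : DifferentiableOn ℂ f (annulus a b)) (hfi : IntegrableOn f (annulus a b))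
    (hc : c ∈ Ioo a b) :
    ∫ z in annulus a b, z ^ 2 / (‖z‖ : ℂ) ^ 2 * f z
      = (I⁻¹ * Real.log (b / a)) * ∮ z in C(0, c), z * f z := by
  have hint : IntegrableOn (fun z : ℂ => z ^ 2 / (‖z‖ : ℂ) ^ 2 * f z) (annulus a b) :=
    hfi.bdd_mul (c := 1) (Measurable.aestronglyMeasurable (by fun_prop))
      (Eventually.of_forall norm_sq_div_norm_sq_le_one)
  have hzf : DifferentiableOn ℂ (fun z => z * f z) (annulus a b) := differentiableOn_id.mul hf
  have hab : 0 ∉ uIcc a b := notMem_uIcc_of_lt ha (ha.trans (hc.1.trans hc.2))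
  rw [setIntegral_annulus_eq_integral_circleMap ha.le hint]
  calc _ = ∫ r in Ioo a b, ((r⁻¹ : ℝ) : ℂ) * (I⁻¹ * ∮ z in C(0, c), z * f z) := by
        refine setIntegral_congr_fun measurableSet_Ioo fun r hr => ?_
        rw [integral_circleMap_sq_div_norm_sq_mul,
          circleIntegral_eq_of_differentiableOn_annulus ha.le hzf hr hc, real_smul, ofReal_inv]
        field_simp
    _ = _ := by
        rw [integral_mul_const, integral_complex_ofReal, ← integral_Ioc_eq_integral_Ioo,
          ← intervalIntegral.integral_of_le (hc.1.trans hc.2).le, integral_inv hab]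
        ring

theorem TendstoUniformlyOn.mul_left_of_norm_le {α ι 𝕜 : Type*} [SeminormedRing 𝕜] {l : Filter ι}
    {F : ι → α → 𝕜} {g : α → 𝕜} {s : Set α} {C : ℝ} (hF : TendstoUniformlyOn F 0 l s)
    (hg : ∀ x ∈ s, ‖g x‖ ≤ C) : TendstoUniformlyOn (fun i x => g x * F i x) 0 l s := by
  rw [Metric.tendstoUniformlyOn_iff] at hF ⊢
  intro ε hε
  obtain ⟨δ, hδ, hCδ⟩ := exists_pos_mul_lt hε C
  filter_upwards [hF δ hδ] with i hi x hx
  specialize hi x hx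
  simp only [Pi.zero_apply, dist_zero_left] at hi ⊢
  calc ‖g x * F i x‖ ≤ ‖g x‖ * ‖F i x‖ := norm_mul_le _ _
    _ ≤ C * δ := mul_le_mul (hg x hx) hi.le (norm_nonneg _) ((norm_nonneg _).trans (hg x hx))
    _ < ε := hCδ

/-- If `fₙ` are holomorphic and integrable on the annulus `A(r₀) = {r₀⁻¹ < |z| < r₀}`
and `fₙ → 0` uniformly on every compact subset of the annulus (with no uniform bound on
the `L¹` norms), then `∫_{A(r₀)} (z²/|z|²)·fₙ(z) dA(z) → 0`. -/
theorem stmt7 (r₀ : ℝ) (hr₀ : 1 < r₀)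
    (f : ℕ → ℂ → ℂ)
    (hdiff : ∀ n, DifferentiableOn ℂ (f n)
      {z : ℂ | r₀⁻¹ < ‖z‖ ∧ ‖z‖ < r₀})
    (hint : ∀ n, IntegrableOn (f n)
      {z : ℂ | r₀⁻¹ < ‖z‖ ∧ ‖z‖ < r₀} volume)
    (hconv : ∀ K : Set ℂ, K ⊆ {z : ℂ | r₀⁻¹ < ‖z‖ ∧ ‖z‖ < r₀} →
      IsCompact K → TendstoUniformlyOn f 0 atTop K) :
    Tendsto (fun n => ∫ z in {z : ℂ | r₀⁻¹ < ‖z‖ ∧ ‖z‖ < r₀},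
        (z ^ 2 / ((‖z‖ : ℂ) ^ 2)) * f n z ∂volume)
      atTop (nhds 0) := by
  have h1 : (1 : ℝ) ∈ Ioo r₀⁻¹ r₀ := ⟨inv_lt_one_of_one_lt₀ hr₀, hr₀⟩
  have hcircle : Tendsto (fun n => ∮ z in C(0, 1), z * f n z) atTop (nhds 0) := by
    have hunif : TendstoUniformlyOn (fun n z => z * f n z) 0 atTop (sphere 0 1) :=
      (hconv _ (sphere_subset_annulus h1) (isCompact_sphere 0 1)).mul_left_of_norm_le
        fun z hz => (mem_sphere_zero_iff_norm.1 hz).le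
    have hlim := hunif.tendsto_circleIntegral_of_continuousOn zero_le_one (Eventually.of_forall
      fun n => (continuousOn_id.mul (hdiff n).continuousOn).mono (sphere_subset_annulus h1))
    rwa [show (∮ z in C(0, 1), (0 : ℂ → ℂ) z) = 0 by
      simp only [Pi.zero_apply, circleIntegral, smul_zero, intervalIntegral.integral_zero]] at hlim
  rw [← mul_zero (I⁻¹ * Real.log (r₀ / r₀⁻¹))]
  exact (hcircle.const_mul _).congr fun n => (setIntegral_annulus_sq_div_norm_sq_mul
    (inv_pos.2 (zero_lt_one.trans hr₀)) (hdiff n) (hint n) h1).symm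
end
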